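/- arXiv:1108.3024 — 2 statements merged into one kernel-verified Lean document; each statement's English description precedes it below -/
import Mathlib

section
/- Let |q| < 1, x ∈ S(q), and t ∈ ℝ with (1-q)t² < 1. Then for every integer n ≥ 0, the series η_n(x|t,q) = Σ_{j≥0} (t^j/[j]_q!) H_{j+n}(x|q) converges and equals H_n(x|t,q) · φ_H(x|t,q), where H_n(x|t,q) is the big q-Hermite polynomial. -/
open Finset MeasureTheory

noncomputable section

/-- [n]_q = 1 + q + ... + q^{n-1} -/
def qNat (q : ℝ) (n : ℕ) : ℝ := ∑ j ∈ Finset.range n, q ^ j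

/-- [n]_q! -/
def qFact (q : ℝ) : ℕ → ℝ
  | 0 => 1
  | n + 1 => qFact q n * qNat q (n + 1)

/-- q-binomial coefficient -/
def qBinom (q : ℝ) (n k : ℕ) : ℝ :=
  if k ≤ n then qFact q n / (qFact q (n - k) * qFact q k) else 0

/-- q-Pochhammer symbol (a;q)_n -/
def qPoch (a q : ℝ) (n : ℕ) : ℝ := ∏ j ∈ Finset.range n, (1 - a * q ^ j)

/-- q-Pochhammer symbol (a;q)_∞ -/
def qPochInf (a q : ℝ) : ℝ := ∏' j : ℕ, (1 - a * q ^ j)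

/-- continuous q-Hermite polynomials H_n(x|q) -/
def qHermite (q : ℝ) : ℕ → ℝ → ℝ
  | 0, _ => 1
  | 1, x => x
  | n + 2, x => x * qHermite q (n + 1) x - qNat q (n + 1) * qHermite q n x

/-- big q-Hermite polynomials H_n(x|a,q) -/
def bigqHermite (q a : ℝ) : ℕ → ℝ → ℝ
  | 0, _ => 1
  | 1, x => x - a
  | n + 2, x => (x - a * q ^ (n + 1)) * bigqHermite q a (n + 1) x -
      qNat q (n + 1) * bigqHermite q a n x

/-- rescaled Al-Salam--Chihara polynomials P_n(x|y,ρ,q) -/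
def ascP (q y ρ : ℝ) : ℕ → ℝ → ℝ
  | 0, _ => 1
  | 1, x => x - ρ * y
  | n + 2, x => (x - ρ * y * q ^ (n + 1)) * ascP q y ρ (n + 1) x -
      qNat q (n + 1) * (1 - ρ ^ 2 * q ^ n) * ascP q y ρ n x

/-- generating function φ_H(x|t,q) of the q-Hermite polynomials -/
def phiH (q t x : ℝ) : ℝ := ∑' n : ℕ, t ^ n / qFact q n * qHermite q n x

/-- γ_{i,j}(x,y|ρ,q) -/
def gammaPM (q ρ : ℝ) (i j : ℕ) (x y : ℝ) : ℝ :=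
  ∑' n : ℕ, ρ ^ n / qFact q n * qHermite q (n + i) x * qHermite q (n + j) y

/-- the polynomials Q_{i,j}(x,y|ρ,q) -/
def Qpoly (q ρ : ℝ) (i j : ℕ) (x y : ℝ) : ℝ :=
  ∑ s ∈ Finset.range (j + 1),
    (-1 : ℝ) ^ s * q ^ (s * (s - 1) / 2) * qBinom q j s * ρ ^ s * qHermite q (j - s) y *
      ascP q y ρ (i + s) x / qPoch (ρ ^ 2) q (i + s)

/-- the interval S(q) = [-2/√(1-q), 2/√(1-q)] -/
def Sq (q : ℝ) : Set ℝ := Set.Icc (-(2 / Real.sqrt (1 - q))) (2 / Real.sqrt (1 - q))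

/-- ω(x,y|ρ) -/
def omegaPM (x y ρ : ℝ) : ℝ :=
  (1 - ρ ^ 2) ^ 2 - 4 * ρ * (1 + ρ ^ 2) * x * y + 4 * ρ ^ 2 * (x ^ 2 + y ^ 2)

/-- l(x|a) -/
def lPM (x a : ℝ) : ℝ := (1 + a) ^ 2 - 4 * a * x ^ 2

/-- the q-Normal density f_N(x|q) -/
def fN (q x : ℝ) : ℝ :=
  Real.sqrt ((1 - q) * (4 - (1 - q) * x ^ 2)) * qPochInf q q / (2 * Real.pi) *
    ∏' j : ℕ, lPM (x * Real.sqrt (1 - q) / 2) (q ^ (j + 1))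

/-- the (q,ρ)-Conditional Normal density f_CN(x|y,ρ,q) -/
def fCN (q ρ x y : ℝ) : ℝ :=
  fN q x * qPochInf (ρ ^ 2) q /
    ∏' j : ℕ, omegaPM (x * Real.sqrt (1 - q) / 2) (y * Real.sqrt (1 - q) / 2) (ρ * q ^ j)

/-- the (ρ,q)-bivariate Normal density f_{2D}(x,y|ρ,q) -/
def f2D (q ρ x y : ℝ) : ℝ := fCN q ρ x y * fN q y

/-!
Write `η_m` for the series `∑ⱼ tʲ / [j]_q! H_{j+m}(x|q)`. Since `[j+m]_q = [m]_q + qᵐ [j]_q`, the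
three-term recurrence of `H_{j+m+1}` together with the index shift `∑ⱼ tʲ [j]_q / [j]_q! a_{j-1} =
t ∑ⱼ tʲ / [j]_q! a_j` gives `η_{m+1} = (x - t qᵐ) η_m - [m]_q η_{m-1}`: the recurrence of the big
q-Hermite polynomials `H_m(x|t,q)`. As `η_0 = φ_H(x|t,q)`, induction gives `η_m = H_m(x|t,q) φ_H`.

The only analytic input is the convergence of `η_0`. For `x √(1-q) = 2 cos θ`, Rogers' formula
`H_n(x|q) (1-q)^{n/2} = ∑ₖ [n k]_q e^{i(n-2k)θ}` and a bound on the Gaussian binomials uniform in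
`n, k` give `|H_n(x|q)| ≤ C (n+1) (1-q)^{-n/2}`, while `[j]_q! = (q;q)_j / (1-q)ʲ ≥ c (1-q)^{-j}`.
So the terms of `η_0` are `O(j rʲ)` with `r = |t| √(1-q) < 1`.
-/

lemma qNat_mul_one_sub (q : ℝ) (n : ℕ) : qNat q n * (1 - q) = 1 - q ^ n :=
  geom_sum_mul_neg q n

lemma qNat_zero (q : ℝ) : qNat q 0 = 0 := rfl

lemma qNat_add (q : ℝ) (a b : ℕ) : qNat q (a + b) = qNat q a + q ^ a * qNat q b := by
  simp only [qNat, sum_range_add, mul_sum, pow_add]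

lemma qNat_pos {q : ℝ} (hq : -1 < q) {n : ℕ} (hn : n ≠ 0) : 0 < qNat q n :=
  geom_sum_pos' (by linarith) hn

lemma qFact_succ (q : ℝ) (n : ℕ) : qFact q (n + 1) = qFact q n * qNat q (n + 1) := rfl

lemma qFact_pos {q : ℝ} (hq : -1 < q) : ∀ n, 0 < qFact q n
  | 0 => one_pos
  | n + 1 => mul_pos (qFact_pos hq n) (qNat_pos hq n.succ_ne_zero)

lemma qPoch_self (q : ℝ) (n : ℕ) : qPoch q q n = ∏ j ∈ range n, (1 - q ^ (j + 1)) := by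
  simp only [qPoch, pow_succ']

lemma qFact_mul_pow (q : ℝ) (n : ℕ) : qFact q n * (1 - q) ^ n = qPoch q q n := by
  induction n with
  | zero => simp [qFact, qPoch]
  | succ n ih =>
    rw [qFact_succ, qPoch_self, prod_range_succ, ← qPoch_self, ← ih, ← qNat_mul_one_sub]
    ring

lemma exp_neg_div_le_one_sub {a r : ℝ} (ha : 0 ≤ a) (har : a ≤ r) (hr : r < 1) :
    Real.exp (-(a / (1 - r))) ≤ 1 - a := by
  have h1a : 0 < 1 - a := by linarith
  calc Real.exp (-(a / (1 - r))) ≤ Real.exp (Real.log (1 - a)) := by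
        gcongr
        calc -(a / (1 - r)) ≤ -(a / (1 - a)) := by
              gcongr
          _ = 1 - (1 - a)⁻¹ := by field_simp; ring
          _ ≤ Real.log (1 - a) := Real.one_sub_inv_le_log_of_pos h1a
    _ = 1 - a := Real.exp_log h1a

section QPochBounds

variable {q : ℝ} (hq : |q| < 1)
include hq

lemma abs_pow_succ_lt_one (j : ℕ) : |q| ^ (j + 1) < 1 :=
  pow_lt_one₀ (abs_nonneg q) hq (by omega)

lemma one_sub_pow_succ_pos (n : ℕ) : 0 < 1 - q ^ (n + 1) := by
  linarith [(le_abs_self (q ^ (n + 1))).trans (abs_pow q _).le, abs_pow_succ_lt_one hq n]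

lemma sum_range_abs_pow_succ_le (n : ℕ) : ∑ j ∈ range n, |q| ^ (j + 1) ≤ |q| / (1 - |q|) := by
  simpa [sum_Ico_eq_sum_range, add_comm] using
    geom_sum_Ico_le_of_lt_one (m := 1) (n := n + 1) (abs_nonneg q) hq

lemma qPoch_le_exp (n : ℕ) : qPoch q q n ≤ Real.exp (|q| / (1 - |q|)) := by
  calc qPoch q q n ≤ ∏ j ∈ range n, Real.exp (|q| ^ (j + 1)) := by
        rw [qPoch_self]
        refine prod_le_prod (fun j _ => ?_) (fun j _ => ?_)
        · exact (one_sub_pow_succ_pos hq j).le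
        · have := neg_abs_le (q ^ (j + 1))
          rw [abs_pow] at this
          linarith [Real.add_one_le_exp (|q| ^ (j + 1))]
    _ = Real.exp (∑ j ∈ range n, |q| ^ (j + 1)) := (Real.exp_sum _ _).symm
    _ ≤ Real.exp (|q| / (1 - |q|)) := Real.exp_le_exp.mpr (sum_range_abs_pow_succ_le hq n)

lemma exp_le_qPoch (n : ℕ) : Real.exp (-(|q| / (1 - |q|) ^ 2)) ≤ qPoch q q n := by
  have h1q : 0 < 1 - |q| := by linarith
  calc Real.exp (-(|q| / (1 - |q|) ^ 2))
      ≤ Real.exp (∑ j ∈ range n, -(|q| ^ (j + 1) / (1 - |q|))) := by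
        rw [sum_neg_distrib, ← sum_div, sq, ← div_div]
        gcongr
        exact sum_range_abs_pow_succ_le hq n
    _ = ∏ j ∈ range n, Real.exp (-(|q| ^ (j + 1) / (1 - |q|))) := Real.exp_sum _ _
    _ ≤ ∏ j ∈ range n, (1 - |q| ^ (j + 1)) :=
        prod_le_prod (fun _ _ => (Real.exp_pos _).le) fun j _ =>
          exp_neg_div_le_one_sub (pow_nonneg (abs_nonneg q) _)
            (pow_le_of_le_one (abs_nonneg q) hq.le j.succ_ne_zero) hq
    _ ≤ qPoch q q n := by
        rw [qPoch_self]
        refine prod_le_prod (fun j _ => ?_) (fun j _ => ?_)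
        · linarith [abs_pow_succ_lt_one hq j]
        · linarith [(le_abs_self (q ^ (j + 1))).trans (abs_pow q _).le]

lemma qPoch_pos (n : ℕ) : 0 < qPoch q q n :=
  (Real.exp_pos _).trans_le (exp_le_qPoch hq n)

end QPochBounds

lemma qPoch_succ (q : ℝ) (n : ℕ) : qPoch q q (n + 1) = qPoch q q n * (1 - q ^ (n + 1)) := by
  rw [qPoch_self, prod_range_succ, ← qPoch_self]

lemma qBinom_zero_right {q : ℝ} (hq : -1 < q) (n : ℕ) : qBinom q n 0 = 1 := by
  simp [qBinom, qFact, (qFact_pos hq n).ne']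

lemma qBinom_self {q : ℝ} (hq : -1 < q) (n : ℕ) : qBinom q n n = 1 := by
  simp [qBinom, qFact, (qFact_pos hq n).ne']

lemma qBinom_of_lt {q : ℝ} {n k : ℕ} (h : n < k) : qBinom q n k = 0 :=
  if_neg (by omega)

lemma qBinom_eq_qPoch {q : ℝ} (hq : q ≠ 1) {n k : ℕ} (hk : k ≤ n) :
    qBinom q n k = qPoch q q n / (qPoch q q (n - k) * qPoch q q k) := by
  have h1q : (1 - q) ^ k ≠ 0 := pow_ne_zero _ (sub_ne_zero.mpr hq.symm)
  have h1q' : (1 - q) ^ (n - k) ≠ 0 := pow_ne_zero _ (sub_ne_zero.mpr hq.symm)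
  rw [qBinom, if_pos hk, ← qFact_mul_pow, ← qFact_mul_pow, ← qFact_mul_pow,
    ← Nat.sub_add_cancel hk, pow_add, Nat.add_sub_cancel]
  field_simp

-- `exp (|q| / (1 - |q|))` bounds `(q;q)_n` above and `exp (-|q| / (1 - |q|)²)` bounds it below.
def qBinomBound (q : ℝ) : ℝ := Real.exp (|q| / (1 - |q|) + 2 * (|q| / (1 - |q|) ^ 2))

lemma abs_qBinom_le {q : ℝ} (hq : |q| < 1) (n k : ℕ) : |qBinom q n k| ≤ qBinomBound q := by
  by_cases hk : k ≤ n
  · have hq1 : q ≠ 1 := by rintro rfl; norm_num at hq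
    have hP := qPoch_pos hq
    rw [qBinom_eq_qPoch hq1 hk, abs_of_pos (div_pos (hP n) (mul_pos (hP _) (hP k)))]
    calc qPoch q q n / (qPoch q q (n - k) * qPoch q q k)
        ≤ Real.exp (|q| / (1 - |q|)) /
            (Real.exp (-(|q| / (1 - |q|) ^ 2)) * Real.exp (-(|q| / (1 - |q|) ^ 2))) :=
          div_le_div₀ (Real.exp_pos _).le (qPoch_le_exp hq n) (by positivity)
            (mul_le_mul (exp_le_qPoch hq _) (exp_le_qPoch hq _) (Real.exp_pos _).le
              (qPoch_pos hq _).le)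
      _ = qBinomBound q := by
          rw [qBinomBound, ← Real.exp_add, ← Real.exp_sub]
          ring_nf
  · rw [qBinom_of_lt (not_le.mp hk), abs_zero]
    exact (Real.exp_pos _).le

lemma qBinom_add_two_succ {q : ℝ} (hq : |q| < 1) (n k : ℕ) :
    qBinom q (n + 2) (k + 1) =
      qBinom q (n + 1) (k + 1) + qBinom q (n + 1) k - (1 - q ^ (n + 1)) * qBinom q n k := by
  have hq' : -1 < q := (abs_lt.mp hq).1
  rcases lt_or_ge n k with hnk | hkn
  · rcases Nat.lt_or_ge (n + 1) k with h | h
    · simp only [qBinom_of_lt (show n + 2 < k + 1 by omega), qBinom_of_lt h,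
        qBinom_of_lt (show n + 1 < k + 1 by omega), qBinom_of_lt hnk]
      ring
    · obtain rfl : k = n + 1 := by omega
      rw [qBinom_self hq', qBinom_self hq', qBinom_of_lt (by omega), qBinom_of_lt hnk]
      ring
  · obtain ⟨m, rfl⟩ : ∃ m, n = k + m := ⟨n - k, by omega⟩
    have hq1 : q ≠ 1 := by rintro rfl; norm_num at hq
    rw [qBinom_eq_qPoch hq1 (by omega), qBinom_eq_qPoch hq1 (by omega),
      qBinom_eq_qPoch hq1 (by omega), qBinom_eq_qPoch hq1 (by omega),
      show k + m + 2 - (k + 1) = m + 1 by omega, show k + m + 1 - (k + 1) = m by omega,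
      show k + m + 1 - k = m + 1 by omega, show k + m - k = m by omega,
      show k + m + 2 = k + m + 1 + 1 by omega, qPoch_succ, qPoch_succ, qPoch_succ, qPoch_succ]
    have := qPoch_pos hq k
    have := qPoch_pos hq m
    have := qPoch_pos hq (k + m)
    have := one_sub_pow_succ_pos hq k
    have := one_sub_pow_succ_pos hq m
    have := one_sub_pow_succ_pos hq (k + m)
    field_simp
    ring

-- Rogers' expansion of `H_n(x|q) (1 - q)^{n/2}` in `z = e^{iθ}`, `x √(1 - q) = 2 cos θ`.
def rogersSum (q : ℝ) (z : ℂ) (n : ℕ) : ℂ :=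
  ∑ k ∈ range (n + 1), (qBinom q n k : ℂ) * z ^ ((n : ℤ) - 2 * k)

lemma rogersSum_eq_sum_range (q : ℝ) (z : ℂ) {n N : ℕ} (hN : n + 1 ≤ N) :
    rogersSum q z n = ∑ k ∈ range N, (qBinom q n k : ℂ) * z ^ ((n : ℤ) - 2 * k) :=
  sum_subset (range_subset_range.mpr hN) fun k _ hk => by
    rw [qBinom_of_lt (by simpa using hk), Complex.ofReal_zero, zero_mul]

lemma rogersSum_add_two {q : ℝ} (hq : |q| < 1) {z : ℂ} (hz : z ≠ 0) (n : ℕ) :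
    rogersSum q z (n + 2) =
      (z + z⁻¹) * rogersSum q z (n + 1) - (1 - q ^ (n + 1)) * rogersSum q z n := by
  have hq' : -1 < q := (abs_lt.mp hq).1
  have hz2 : rogersSum q z (n + 2) = z ^ (n + 2) +
      ∑ k ∈ range (n + 2), (qBinom q (n + 2) (k + 1) : ℂ) * z ^ ((n : ℤ) - 2 * k) := by
    rw [rogersSum, sum_range_succ', qBinom_zero_right hq', add_comm]
    push_cast
    congr 1
    · simp [← zpow_natCast]
    · refine sum_congr rfl fun k _ => ?_
      congr 2
      ring
  have hz1 : z * rogersSum q z (n + 1) = z ^ (n + 2) +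
      ∑ k ∈ range (n + 2), (qBinom q (n + 1) (k + 1) : ℂ) * z ^ ((n : ℤ) - 2 * k) := by
    rw [rogersSum_eq_sum_range q z (show n + 1 + 1 ≤ n + 3 by omega), mul_sum, sum_range_succ',
      qBinom_zero_right hq', add_comm]
    push_cast
    congr 1
    · rw [one_mul, ← zpow_one_add₀ hz, ← zpow_natCast]
      congr 1
      push_cast
      ring
    · refine sum_congr rfl fun k _ => ?_
      rw [mul_left_comm, ← zpow_one_add₀ hz]
      congr 2
      ring
  have hzinv : z⁻¹ * rogersSum q z (n + 1) =
      ∑ k ∈ range (n + 2), (qBinom q (n + 1) k : ℂ) * z ^ ((n : ℤ) - 2 * k) := by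
    rw [rogersSum, mul_sum]
    refine sum_congr rfl fun k _ => ?_
    rw [mul_left_comm, ← zpow_neg_one, ← zpow_add₀ hz]
    congr 2
    push_cast
    ring
  have h0 : rogersSum q z n =
      ∑ k ∈ range (n + 2), (qBinom q n k : ℂ) * z ^ ((n : ℤ) - 2 * k) :=
    rogersSum_eq_sum_range q z (by omega)
  rw [hz2, add_mul, hz1, hzinv, h0, mul_sum]
  simp only [qBinom_add_two_succ hq]
  push_cast
  simp only [sub_mul, add_mul, sum_sub_distrib, sum_add_distrib, mul_assoc]
  ring

lemma qHermite_mul_pow_eq_rogersSum {q x s : ℝ} (hq : |q| < 1) (hs : s ^ 2 = 1 - q) {z : ℂ}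
    (hz : z ≠ 0) (hxz : ((x * s : ℝ) : ℂ) = z + z⁻¹) (n : ℕ) :
    ((qHermite q n x * s ^ n : ℝ) : ℂ) = rogersSum q z n := by
  have hq' : -1 < q := (abs_lt.mp hq).1
  induction n using Nat.twoStepInduction with
  | zero => simp [rogersSum, qHermite, qBinom_zero_right hq']
  | one =>
    simp only [rogersSum, sum_range_succ, sum_range_zero, qBinom_zero_right hq', qBinom_self hq']
    simp [qHermite, hxz]
  | more n ih₀ ih₁ =>
    have hrec : qHermite q (n + 2) x * s ^ (n + 2) =
        (x * s) * (qHermite q (n + 1) x * s ^ (n + 1)) -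
          (1 - q ^ (n + 1)) * (qHermite q n x * s ^ n) := by
      rw [← qNat_mul_one_sub, ← hs]
      simp only [qHermite]
      ring
    rw [rogersSum_add_two hq hz, ← ih₀, ← ih₁, ← hxz, hrec]
    push_cast
    ring

lemma norm_rogersSum_le {q : ℝ} (hq : |q| < 1) {z : ℂ} (hz : ‖z‖ = 1) (n : ℕ) :
    ‖rogersSum q z n‖ ≤ (n + 1) * qBinomBound q :=
  calc ‖rogersSum q z n‖
      ≤ ∑ k ∈ range (n + 1), ‖(qBinom q n k : ℂ) * z ^ ((n : ℤ) - 2 * k)‖ := norm_sum_le _ _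
    _ ≤ ∑ _k ∈ range (n + 1), qBinomBound q := sum_le_sum fun k _ => by
        rw [norm_mul, norm_zpow, hz, one_zpow, mul_one, Complex.norm_real, Real.norm_eq_abs]
        exact abs_qBinom_le hq n k
    _ = (n + 1) * qBinomBound q := by simp

lemma exists_norm_eq_one_add_inv_eq {y : ℝ} (hy : |y| ≤ 2) :
    ∃ z : ℂ, ‖z‖ = 1 ∧ (y : ℂ) = z + z⁻¹ := by
  refine ⟨Complex.exp (Real.arccos (y / 2) * Complex.I), Complex.norm_exp_ofReal_mul_I _, ?_⟩
  rw [← Complex.exp_neg, ← neg_mul, ← Complex.two_cos, ← Complex.ofReal_cos,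
    Real.cos_arccos (by linarith [neg_abs_le y]) (by linarith [le_abs_self y])]
  push_cast
  ring

lemma abs_qHermite_mul_pow_le {q x : ℝ} (hq : |q| < 1) (hx : x ∈ Sq q) (n : ℕ) :
    |qHermite q n x| * √(1 - q) ^ n ≤ (n + 1) * qBinomBound q := by
  have h1q : 0 < 1 - q := by linarith [le_abs_self q]
  have hs := Real.sqrt_pos.mpr h1q
  have hxs : |x * √(1 - q)| ≤ 2 := by
    rw [abs_mul, abs_of_pos hs, ← le_div_iff₀ hs]
    exact abs_le.mpr hx
  obtain ⟨z, hz, hxz⟩ := exists_norm_eq_one_add_inv_eq hxs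
  have hz0 : z ≠ 0 := norm_ne_zero_iff.mp (by rw [hz]; exact one_ne_zero)
  rw [← abs_of_pos hs, ← abs_pow, ← abs_mul, ← Real.norm_eq_abs, ← Complex.norm_real,
    qHermite_mul_pow_eq_rogersSum hq (Real.sq_sqrt h1q.le) hz0 hxz]
  exact norm_rogersSum_le hq hz n

lemma summable_qHermite_series {q x t : ℝ} (hq : |q| < 1) (hx : x ∈ Sq q)
    (ht : (1 - q) * t ^ 2 < 1) : Summable fun j : ℕ => t ^ j / qFact q j * qHermite q j x := by
  have h1q : 0 < 1 - q := by linarith [le_abs_self q]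
  set s := √(1 - q)
  have hs : 0 < s := Real.sqrt_pos.mpr h1q
  have hs2 : s ^ 2 = 1 - q := Real.sq_sqrt h1q.le
  obtain ⟨r, hr⟩ : ∃ r, r = |t| * s := ⟨_, rfl⟩
  have hr0 : 0 ≤ r := by rw [hr]; positivity
  have hr1 : r < 1 := by
    have : r ^ 2 < 1 := by rw [hr, mul_pow, sq_abs, hs2, mul_comm]; exact ht
    nlinarith
  set D := Real.exp (-(|q| / (1 - |q|) ^ 2))
  have hD : 0 < D := Real.exp_pos _
  have hmaj : Summable fun j : ℕ => qBinomBound q / D * ((j : ℝ) * r ^ j + r ^ j) := by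
    have hr1' : ‖r‖ < 1 := by rwa [Real.norm_of_nonneg hr0]
    exact (((summable_pow_mul_geometric_of_norm_lt_one 1 hr1').congr fun j => by simp).add
      (summable_geometric_of_lt_one hr0 hr1)).mul_left _
  refine hmaj.of_norm_bounded fun j => ?_
  have hP := qPoch_pos hq j
  have hfact : qFact q j = qPoch q q j / (s ^ 2) ^ j := by
    rw [hs2, ← qFact_mul_pow, mul_div_cancel_right₀ _ (pow_ne_zero _ h1q.ne')]
  calc ‖t ^ j / qFact q j * qHermite q j x‖
      = r ^ j * (|qHermite q j x| * s ^ j) / qPoch q q j := by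
        rw [Real.norm_eq_abs, hfact, abs_mul, abs_div, abs_pow,
          abs_of_pos (div_pos hP (by positivity)), hr, mul_pow, ← pow_mul]
        field_simp
        ring
    _ ≤ r ^ j * ((j + 1) * qBinomBound q) / D :=
        div_le_div₀ (by unfold qBinomBound; positivity)
          (mul_le_mul_of_nonneg_left (abs_qHermite_mul_pow_le hq hx j) (by positivity)) hD
          (exp_le_qPoch hq j)
    _ = qBinomBound q / D * ((j : ℝ) * r ^ j + r ^ j) := by ring

-- At `n = 0` the truncated index `n - 1` is harmless: it is multiplied by `[0]_q = 0`.
lemma qHermite_succ (q : ℝ) (n : ℕ) (x : ℝ) :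
    qHermite q (n + 1) x = x * qHermite q n x - qNat q n * qHermite q (n - 1) x := by
  cases n with
  | zero => simp [qHermite, qNat_zero]
  | succ n => rfl

lemma bigqHermite_succ (q a : ℝ) (n : ℕ) (x : ℝ) :
    bigqHermite q a (n + 1) x =
      (x - a * q ^ n) * bigqHermite q a n x - qNat q n * bigqHermite q a (n - 1) x := by
  cases n with
  | zero => simp [bigqHermite, qNat_zero]
  | succ n => rfl

section HermiteSeries

variable {q t x : ℝ}

lemma hasSum_qNat_mul_qHermite_series (hq : -1 < q) {m : ℕ} {S : ℝ}
    (h : HasSum (fun j => t ^ j / qFact q j * qHermite q (j + m) x) S) :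
    HasSum (fun j => t ^ j / qFact q j * qNat q j * qHermite q (j + m - 1) x) (t * S) := by
  have hshift : HasSum (fun j => t ^ (j + 1) / qFact q (j + 1) * qNat q (j + 1) *
      qHermite q (j + 1 + m - 1) x) (t * S) := by
    refine (h.mul_left t).congr_fun fun j => ?_
    rw [qFact_succ, show j + 1 + m - 1 = j + m by omega]
    have := (qNat_pos hq j.succ_ne_zero).ne'
    field_simp
    ring
  simpa only [qNat_zero, mul_zero, zero_mul, zero_add] using
    HasSum.zero_add (f := fun j => t ^ j / qFact q j * qNat q j * qHermite q (j + m - 1) x) hshift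

lemma HasSum.qHermite_series_succ (hq : -1 < q) {m : ℕ} {S S' : ℝ}
    (h : HasSum (fun j => t ^ j / qFact q j * qHermite q (j + m) x) S)
    (h' : HasSum (fun j => t ^ j / qFact q j * qHermite q (j + (m - 1)) x) S') :
    HasSum (fun j => t ^ j / qFact q j * qHermite q (j + (m + 1)) x)
      ((x - t * q ^ m) * S - qNat q m * S') := by
  rw [show (x - t * q ^ m) * S - qNat q m * S' = x * S - qNat q m * S' - q ^ m * (t * S) by ring]
  refine (((h.mul_left x).sub (h'.mul_left (qNat q m))).sub
    ((hasSum_qNat_mul_qHermite_series hq h).mul_left (q ^ m))).congr_fun fun j => ?_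
  have hm : qNat q m * qHermite q (j + m - 1) x = qNat q m * qHermite q (j + (m - 1)) x := by
    rcases m with _ | m
    · simp [qNat_zero]
    · rfl
  rw [← add_assoc, qHermite_succ, add_comm j m, qNat_add, add_comm m j]
  linear_combination (-(t ^ j / qFact q j)) * hm

end HermiteSeries

/-- for |q|<1, x ∈ S(q), (1-q)t² < 1, the series
η_n(x|t,q) = Σ_{j≥0} (t^j/[j]_q!) H_{j+n}(x|q) converges to H_n(x|t,q)·φ_H(x|t,q). -/
theorem statement0 (q x t : ℝ) (hq : |q| < 1) (hx : x ∈ Sq q) (ht : (1 - q) * t ^ 2 < 1)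
    (n : ℕ) :
    HasSum (fun j : ℕ => t ^ j / qFact q j * qHermite q (j + n) x)
      (bigqHermite q t n x * phiH q t x) := by
  have hφ : HasSum (fun j : ℕ => t ^ j / qFact q j * qHermite q (j + 0) x) (phiH q t x) :=
    (summable_qHermite_series hq hx ht).hasSum
  induction n using Nat.strong_induction_on with
  | _ n ih =>
    rcases n with _ | m
    · simpa [bigqHermite] using hφ
    · rw [bigqHermite_succ, sub_mul, mul_assoc, mul_assoc]
      exact (ih m m.lt_succ_self).qHermite_series_succ (abs_lt.mp hq).1 (ih (m - 1) (by omega))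
end
end

section
/- For all -1 < q ≤ 1, all ρ with |ρ| < 1, all real x, y, and all integers i, j ≥ 0: Q_{i,j}(x,y|ρ,q) = Q_{j,i}(y,x|ρ,q). -/
open Finset MeasureTheory

noncomputable section

/-!
Both `F i j = Q_{i,j}(x,y|ρ,q)` and `G i j = Q_{j,i}(y,x|ρ,q)` satisfy the pair of recurrences
`F_{i+1,j} = x F_{i,j} - [i]_q F_{i-1,j} - ρ q^i F_{i,j+1}` and
`F_{i,j+1} = y F_{i,j} - [j]_q F_{i,j-1} - ρ q^j F_{i+1,j}`:
for `Q` the second follows from the recurrence of `H_n` and a q-Pascal rule, the first from the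
recurrence of `P_n`, and exchanging `(i, x)` with `(j, y)` swaps the two. Eliminating the mixed
term gives `(1 - ρ² q^{i+j}) F_{i+1,j}` (and symmetrically `F_{i,j+1}`) in terms of values of
lower total degree; since `|ρ| < 1` and `|q| ≤ 1` this factor never vanishes, so `F = G` by induction
from `F_{0,0} = G_{0,0} = 1`.
-/

namespace QpolySymmetry

variable {q : ℝ}

lemma qNat_zero : qNat q 0 = 0 := by simp [qNat]

lemma qNat_add (a b : ℕ) : qNat q (a + b) = qNat q a + q ^ a * qNat q b := by
  simp only [qNat, Finset.sum_range_add, pow_add, Finset.mul_sum]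

lemma qNat_pos (hq : -1 < q) {n : ℕ} (hn : n ≠ 0) : 0 < qNat q n :=
  geom_sum_pos' (by linarith) hn

lemma qFact_succ (n : ℕ) : qFact q (n + 1) = qFact q n * qNat q (n + 1) := rfl

lemma qFact_ne_zero (hq : -1 < q) (n : ℕ) : qFact q n ≠ 0 := by
  induction n with
  | zero => exact one_ne_zero
  | succ n ih => exact mul_ne_zero ih (qNat_pos hq n.succ_ne_zero).ne'

lemma qBinom_of_lt {n k : ℕ} (h : n < k) : qBinom q n k = 0 := by
  rw [qBinom, if_neg h.not_ge]

lemma qBinom_of_le {n k : ℕ} (h : k ≤ n) :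
    qBinom q n k = qFact q n / (qFact q (n - k) * qFact q k) := by
  rw [qBinom, if_pos h]

section
variable (hq : -1 < q)
include hq

lemma qBinom_zero_right (n : ℕ) : qBinom q n 0 = 1 := by
  rw [qBinom_of_le n.zero_le, Nat.sub_zero, qFact, mul_one, div_self (qFact_ne_zero hq n)]

lemma qBinom_self (n : ℕ) : qBinom q n n = 1 := by
  rw [qBinom_of_le le_rfl, Nat.sub_self, qFact, one_mul, div_self (qFact_ne_zero hq n)]

lemma qBinom_succ_succ (j s : ℕ) :
    qBinom q (j + 1) (s + 1) = qBinom q j (s + 1) + q ^ (j - s) * qBinom q j s := by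
  rcases lt_trichotomy j s with h | rfl | h
  · rw [qBinom_of_lt (by omega), qBinom_of_lt (by omega), qBinom_of_lt h, mul_zero, add_zero]
  · rw [qBinom_self hq, qBinom_of_lt j.lt_succ_self, qBinom_self hq, Nat.sub_self]
    ring
  · obtain ⟨t, rfl⟩ := Nat.exists_eq_add_of_lt h
    rw [qBinom_of_le (by omega), qBinom_of_le (by omega), qBinom_of_le (by omega),
      show s + t + 1 + 1 - (s + 1) = t + 1 by omega, show s + t + 1 - (s + 1) = t by omega,
      show s + t + 1 - s = t + 1 by omega, qFact_succ (s + t + 1), qFact_succ t, qFact_succ s,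
      show s + t + 1 + 1 = (t + 1) + (s + 1) by omega, qNat_add]
    have := qFact_ne_zero hq t
    have := qFact_ne_zero hq s
    have := (qNat_pos hq t.succ_ne_zero).ne'
    have := (qNat_pos hq s.succ_ne_zero).ne'
    field_simp

lemma qBinom_succ_succ' (j s : ℕ) :
    qBinom q (j + 1) (s + 1) = q ^ (s + 1) * qBinom q j (s + 1) + qBinom q j s := by
  rcases lt_trichotomy j s with h | rfl | h
  · rw [qBinom_of_lt (by omega), qBinom_of_lt (by omega), qBinom_of_lt h, mul_zero, add_zero]
  · rw [qBinom_self hq, qBinom_of_lt j.lt_succ_self, qBinom_self hq]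
    ring
  · obtain ⟨t, rfl⟩ := Nat.exists_eq_add_of_lt h
    rw [qBinom_of_le (by omega), qBinom_of_le (by omega), qBinom_of_le (by omega),
      show s + t + 1 + 1 - (s + 1) = t + 1 by omega, show s + t + 1 - (s + 1) = t by omega,
      show s + t + 1 - s = t + 1 by omega, qFact_succ (s + t + 1), qFact_succ t, qFact_succ s,
      show s + t + 1 + 1 = (s + 1) + (t + 1) by omega, qNat_add]
    have := qFact_ne_zero hq t
    have := qFact_ne_zero hq s
    have := (qNat_pos hq t.succ_ne_zero).ne'
    have := (qNat_pos hq s.succ_ne_zero).ne'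
    field_simp
    ring

lemma qNat_mul_qBinom_pred (j s : ℕ) :
    qNat q j * qBinom q (j - 1) s = qBinom q j s * qNat q (j - s) := by
  rcases j with _ | m
  · simp [qNat_zero]
  rw [Nat.add_sub_cancel]
  rcases Nat.lt_or_ge m s with h | h
  · rw [qBinom_of_lt h, mul_zero]
    rcases (Nat.succ_le_of_lt h).lt_or_eq with h' | rfl
    · rw [qBinom_of_lt h', zero_mul]
    · rw [Nat.sub_self, qNat_zero, mul_zero]
  · obtain ⟨t, rfl⟩ := Nat.exists_eq_add_of_le h
    rw [qBinom_of_le h, qBinom_of_le (by omega), show s + t + 1 - s = t + 1 by omega,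
      Nat.add_sub_cancel_left, qFact_succ t, qFact_succ (s + t)]
    have := qFact_ne_zero hq t
    have := qFact_ne_zero hq s
    have := (qNat_pos hq t.succ_ne_zero).ne'
    field_simp

lemma qBinom_succ_mul_qNat (j s : ℕ) :
    qBinom q j (s + 1) * qNat q (s + 1) = qNat q j * qBinom q (j - 1) s := by
  rcases j with _ | m
  · simp [qNat_zero, qBinom_of_lt]
  rw [Nat.add_sub_cancel]
  rcases Nat.lt_or_ge m s with h | h
  · rw [qBinom_of_lt (by omega), qBinom_of_lt h]
    ring
  · obtain ⟨t, rfl⟩ := Nat.exists_eq_add_of_le h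
    rw [qBinom_of_le (by omega), qBinom_of_le h, show s + t + 1 - (s + 1) = t by omega,
      Nat.add_sub_cancel_left, qFact_succ s, qFact_succ (s + t)]
    have := qFact_ne_zero hq t
    have := qFact_ne_zero hq s
    have := (qNat_pos hq s.succ_ne_zero).ne'
    field_simp

end

lemma qHermite_succ (n : ℕ) (y : ℝ) :
    qHermite q (n + 1) y = y * qHermite q n y - qNat q n * qHermite q (n - 1) y := by
  rcases n with _ | n
  · simp [qHermite, qNat_zero]
  · rfl

lemma ascP_succ (y ρ x : ℝ) (n : ℕ) :
    ascP q y ρ (n + 1) x = (x - ρ * y * q ^ n) * ascP q y ρ n x -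
      qNat q n * (1 - ρ ^ 2 * q ^ (n - 1)) * ascP q y ρ (n - 1) x := by
  rcases n with _ | n
  · simp [ascP, qNat_zero]
  · rfl

lemma qPoch_succ (a : ℝ) (n : ℕ) : qPoch a q (n + 1) = qPoch a q n * (1 - a * q ^ n) :=
  Finset.prod_range_succ _ _

def signCoeff (q ρ : ℝ) (s : ℕ) : ℝ := (-1) ^ s * q ^ (s * (s - 1) / 2) * ρ ^ s

lemma signCoeff_succ (ρ : ℝ) (s : ℕ) :
    signCoeff q ρ (s + 1) = -ρ * q ^ s * signCoeff q ρ s := by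
  rw [signCoeff, signCoeff, Nat.triangle_succ, pow_add, pow_succ, pow_succ]
  ring

/-- `Qpoly` with an arbitrary sequence `R` in place of `P_m(x|y,ρ,q)/(ρ²;q)_m` and an extra
weight `w` on the summands. -/
def QSum (q ρ y : ℝ) (R w : ℕ → ℝ) (i j : ℕ) : ℝ :=
  ∑ s ∈ Finset.range (j + 1),
    signCoeff q ρ s * w s * qBinom q j s * qHermite q (j - s) y * R (i + s)

lemma Qpoly_eq_QSum (ρ x y : ℝ) (i j : ℕ) :
    Qpoly q ρ i j x y =
      QSum q ρ y (fun m => ascP q y ρ m x / qPoch (ρ ^ 2) q m) 1 i j := by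
  refine Finset.sum_congr rfl fun s _ => ?_
  simp only [signCoeff, Pi.one_apply]
  ring

section
variable {ρ y : ℝ} {R w : ℕ → ℝ}

lemma QSum_eq_sum_range {i j N : ℕ} (hN : j + 1 ≤ N) :
    QSum q ρ y R w i j = ∑ s ∈ Finset.range N,
      signCoeff q ρ s * w s * qBinom q j s * qHermite q (j - s) y * R (i + s) := by
  refine Finset.sum_subset (Finset.range_subset_range.2 hN) fun s _ hs => ?_
  rw [qBinom_of_lt (by simpa using hs), mul_zero, zero_mul, zero_mul]

variable (hq : -1 < q)
include hq

/-- The three-term recurrence of `H_n(y|q)`, applied termwise. -/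
lemma mul_QSum_sub (i j : ℕ) :
    y * QSum q ρ y R w i j - qNat q j * QSum q ρ y R w i (j - 1) =
      ∑ s ∈ Finset.range (j + 1 + 1),
        signCoeff q ρ s * w s * qBinom q j s * qHermite q (j + 1 - s) y * R (i + s) := by
  rw [QSum_eq_sum_range (N := j + 2) (by omega), QSum_eq_sum_range (N := j + 2) (by omega),
    Finset.mul_sum, Finset.mul_sum, ← Finset.sum_sub_distrib]
  refine Finset.sum_congr rfl fun s hs => ?_
  rcases Nat.lt_or_ge j s with h | h
  · rw [qBinom_of_lt h, qBinom_of_lt (by omega)]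
    ring
  · rw [show j + 1 - s = j - s + 1 by omega, qHermite_succ, show j - 1 - s = j - s - 1 by omega]
    linear_combination -signCoeff q ρ s * w s * qHermite q (j - s - 1) y * R (i + s) *
      qNat_mul_qBinom_pred hq j s

/-- Raising `j` in `QSum` with weight `1`: a q-Pascal rule `hw` splits `[j+1, s+1]`, and the
recurrence of `H_n` together with `signCoeff_succ` turns the two pieces into `QSum`s. -/
lemma QSum_one_succ_right (v : ℕ → ℝ) (hw0 : w 0 = 1) (i j : ℕ)
    (hw : ∀ s, qBinom q (j + 1) (s + 1) = w (s + 1) * qBinom q j (s + 1) + v s * qBinom q j s) :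
    QSum q ρ y R 1 i (j + 1) = y * QSum q ρ y R w i j - qNat q j * QSum q ρ y R w i (j - 1) -
      ρ * QSum q ρ y R (fun s => q ^ s * v s) (i + 1) j := by
  rw [mul_QSum_sub hq]
  suffices QSum q ρ y R 1 i (j + 1) - ∑ s ∈ Finset.range (j + 1 + 1),
      signCoeff q ρ s * w s * qBinom q j s * qHermite q (j + 1 - s) y * R (i + s) =
      -(ρ * QSum q ρ y R (fun s => q ^ s * v s) (i + 1) j) by linarith
  rw [QSum, QSum, ← Finset.sum_sub_distrib, Finset.mul_sum, ← Finset.sum_neg_distrib,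
    Finset.sum_range_succ', qBinom_zero_right hq, qBinom_zero_right hq, hw0, Pi.one_apply,
    sub_self, add_zero]
  refine Finset.sum_congr rfl fun s _ => ?_
  rw [show j + 1 - (s + 1) = j - s by omega, show i + (s + 1) = i + 1 + s by omega,
    signCoeff_succ, Pi.one_apply, hw]
  ring

variable {x : ℝ}

lemma QSum_succ_right (i j : ℕ) :
    QSum q ρ y R 1 i (j + 1) = y * QSum q ρ y R 1 i j - qNat q j * QSum q ρ y R 1 i (j - 1) -
      ρ * q ^ j * QSum q ρ y R 1 (i + 1) j := by
  have hpow : QSum q ρ y R (fun s => q ^ s * q ^ (j - s)) (i + 1) j =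
      q ^ j * QSum q ρ y R 1 (i + 1) j := by
    rw [QSum, QSum, Finset.mul_sum]
    refine Finset.sum_congr rfl fun s hs => ?_
    rw [← pow_add, Nat.add_sub_cancel' (Nat.lt_succ_iff.1 (Finset.mem_range.1 hs)), Pi.one_apply]
    ring
  rw [QSum_one_succ_right hq (w := 1) (fun s => q ^ (j - s)) rfl i j fun s => by
    rw [Pi.one_apply, one_mul, qBinom_succ_succ hq], hpow, mul_assoc]

lemma QSum_succ_right_qpow (i j : ℕ) :
    QSum q ρ y R 1 i (j + 1) = y * QSum q ρ y R (q ^ ·) i j -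
      qNat q j * QSum q ρ y R (q ^ ·) i (j - 1) - ρ * QSum q ρ y R (q ^ ·) (i + 1) j := by
  simpa using QSum_one_succ_right hq (w := (q ^ ·)) 1 (pow_zero q) i j fun s => by
    rw [Pi.one_apply, one_mul, qBinom_succ_succ' hq]

lemma sum_qNat_mul_eq_QSum_qpow (i j : ℕ) :
    ∑ s ∈ Finset.range (j + 1),
      signCoeff q ρ s * qBinom q j s * qNat q s * qHermite q (j - s) y * R (i + s - 1) =
      -(ρ * qNat q j * QSum q ρ y R (q ^ ·) i (j - 1)) := by
  rw [Finset.sum_range_succ', qNat_zero, mul_zero, zero_mul, zero_mul, add_zero]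
  rcases j with _ | m
  · simp [qNat_zero]
  rw [QSum, Nat.add_sub_cancel, Finset.mul_sum, ← Finset.sum_neg_distrib]
  refine Finset.sum_congr rfl fun s _ => ?_
  rw [show m + 1 - (s + 1) = m - s by omega, show i + (s + 1) - 1 = i + s by omega,
    signCoeff_succ]
  have hb := qBinom_succ_mul_qNat hq (m + 1) s
  rw [Nat.add_sub_cancel] at hb
  linear_combination -ρ * q ^ s * signCoeff q ρ s * qHermite q (m - s) y * R (i + s) * hb

/-- Raising `i` in `QSum`: here the three-term recurrence of `R` replaces that of `H_n`. -/
lemma QSum_succ_left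
    (hR : ∀ m, (1 - ρ ^ 2 * q ^ m) * R (m + 1) =
      (x - ρ * y * q ^ m) * R m - qNat q m * R (m - 1))
    (i j : ℕ) :
    QSum q ρ y R 1 (i + 1) j = x * QSum q ρ y R 1 i j - qNat q i * QSum q ρ y R 1 (i - 1) j -
      ρ * q ^ i * QSum q ρ y R 1 i (j + 1) := by
  have expand : QSum q ρ y R 1 (i + 1) j = x * QSum q ρ y R 1 i j -
      ρ * y * q ^ i * QSum q ρ y R (q ^ ·) i j -
      (∑ s ∈ Finset.range (j + 1),
        signCoeff q ρ s * qBinom q j s * qNat q (i + s) * qHermite q (j - s) y * R (i + s - 1)) +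
      ρ ^ 2 * q ^ i * QSum q ρ y R (q ^ ·) (i + 1) j := by
    simp only [QSum, Finset.mul_sum, ← Finset.sum_sub_distrib, ← Finset.sum_add_distrib]
    refine Finset.sum_congr rfl fun s _ => ?_
    rw [show i + 1 + s = i + s + 1 by omega, Pi.one_apply]
    linear_combination signCoeff q ρ s * qBinom q j s * qHermite q (j - s) y * hR (i + s)
  have shift : qNat q i * QSum q ρ y R 1 (i - 1) j = ∑ s ∈ Finset.range (j + 1),
      qNat q i * (signCoeff q ρ s * qBinom q j s * qHermite q (j - s) y * R (i + s - 1)) := by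
    rw [QSum, Finset.mul_sum]
    rcases i with _ | k
    · simp [qNat_zero]
    refine Finset.sum_congr rfl fun s _ => ?_
    rw [show k + 1 - 1 + s = k + 1 + s - 1 by omega, Pi.one_apply, mul_one]
  have middle : (∑ s ∈ Finset.range (j + 1),
        signCoeff q ρ s * qBinom q j s * qNat q (i + s) * qHermite q (j - s) y * R (i + s - 1)) =
      qNat q i * QSum q ρ y R 1 (i - 1) j -
        ρ * q ^ i * qNat q j * QSum q ρ y R (q ^ ·) i (j - 1) := by
    have split : (∑ s ∈ Finset.range (j + 1),
          signCoeff q ρ s * qBinom q j s * qNat q (i + s) * qHermite q (j - s) y * R (i + s - 1)) =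
        (∑ s ∈ Finset.range (j + 1),
          qNat q i * (signCoeff q ρ s * qBinom q j s * qHermite q (j - s) y * R (i + s - 1))) +
        q ^ i * ∑ s ∈ Finset.range (j + 1),
          signCoeff q ρ s * qBinom q j s * qNat q s * qHermite q (j - s) y * R (i + s - 1) := by
      rw [Finset.mul_sum, ← Finset.sum_add_distrib]
      refine Finset.sum_congr rfl fun s _ => ?_
      rw [qNat_add]
      ring
    rw [shift, split, sum_qNat_mul_eq_QSum_qpow hq]
    ring
  rw [expand, middle, QSum_succ_right_qpow hq]
  ring
end

variable {ρ : ℝ}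

lemma one_sub_sq_mul_pow_pos (hq1 : -1 < q) (hq2 : q ≤ 1) (hρ : |ρ| < 1) (n : ℕ) :
    0 < 1 - ρ ^ 2 * q ^ n := by
  have hρ2 : ρ ^ 2 < 1 := (sq_lt_one_iff_abs_lt_one ρ).2 hρ
  have hqn : q ^ n ≤ 1 := (le_abs_self _).trans <| by
    rw [abs_pow]; exact pow_le_one₀ (abs_nonneg q) (abs_le.2 ⟨hq1.le, hq2⟩)
  nlinarith [sq_nonneg ρ]

lemma qPoch_ne_zero {a : ℝ} (ha : ∀ n, 1 - a * q ^ n ≠ 0) (n : ℕ) : qPoch a q n ≠ 0 :=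
  Finset.prod_ne_zero_iff.2 fun n _ => ha n

/-- The recurrence of `P_m(x|y,ρ,q)` divided by `(ρ²;q)_{m+1}`. -/
lemma ascP_div_qPoch_succ (hd : ∀ n, 1 - ρ ^ 2 * q ^ n ≠ 0) (x y : ℝ) (m : ℕ) :
    (1 - ρ ^ 2 * q ^ m) * (ascP q y ρ (m + 1) x / qPoch (ρ ^ 2) q (m + 1)) =
      (x - ρ * y * q ^ m) * (ascP q y ρ m x / qPoch (ρ ^ 2) q m) -
        qNat q m * (ascP q y ρ (m - 1) x / qPoch (ρ ^ 2) q (m - 1)) := by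
  rw [ascP_succ, qPoch_succ]
  rcases m with _ | k
  · have h0 := hd 0
    rw [pow_zero, mul_one] at h0
    simp only [qNat_zero, ascP, qPoch, Finset.prod_range_zero, pow_zero, mul_one]
    field_simp
    ring
  · rw [Nat.add_sub_cancel, qPoch_succ]
    have := qPoch_ne_zero hd k
    have := hd k
    have := hd (k + 1)
    field_simp

structure QRecurrence (q ρ x y : ℝ) (F : ℕ → ℕ → ℝ) : Prop where
  succ_left : ∀ i j, F (i + 1) j = x * F i j - qNat q i * F (i - 1) j - ρ * q ^ i * F i (j + 1)
  succ_right : ∀ i j, F i (j + 1) = y * F i j - qNat q j * F i (j - 1) - ρ * q ^ j * F (i + 1) j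

namespace QRecurrence

variable {x y : ℝ} {F G : ℕ → ℕ → ℝ}

lemma swap (hF : QRecurrence q ρ x y F) : QRecurrence q ρ y x fun i j => F j i :=
  ⟨fun i j => hF.succ_right j i, fun i j => hF.succ_left j i⟩

lemma mul_succ_left (hF : QRecurrence q ρ x y F) (i j : ℕ) :
    (1 - ρ ^ 2 * q ^ (i + j)) * F (i + 1) j =
      (x - ρ * q ^ i * y) * F i j - qNat q i * F (i - 1) j +
        ρ * q ^ i * qNat q j * F i (j - 1) := by
  linear_combination hF.succ_left i j - ρ * q ^ i * hF.succ_right i j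

lemma mul_succ_right (hF : QRecurrence q ρ x y F) (i j : ℕ) :
    (1 - ρ ^ 2 * q ^ (i + j)) * F i (j + 1) =
      (y - ρ * q ^ j * x) * F i j - qNat q j * F i (j - 1) +
        ρ * q ^ j * qNat q i * F (i - 1) j := by
  linear_combination hF.succ_right i j - ρ * q ^ j * hF.succ_left i j

lemma ext (hd : ∀ n, 1 - ρ ^ 2 * q ^ n ≠ 0) (hF : QRecurrence q ρ x y F)
    (hG : QRecurrence q ρ x y G) (h00 : F 0 0 = G 0 0) : F = G := by
  suffices ∀ n i j, i + j ≤ n → F i j = G i j from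
    funext fun i => funext fun j => this (i + j) i j le_rfl
  intro n
  induction n with
  | zero =>
    intro i j h
    obtain ⟨rfl, rfl⟩ : i = 0 ∧ j = 0 := by omega
    exact h00
  | succ n ih =>
    rintro (_ | i) (_ | j) h
    · exact h00
    · refine mul_left_cancel₀ (hd (0 + j)) ?_
      rw [hF.mul_succ_right, hG.mul_succ_right, ih 0 j (by omega), ih 0 (j - 1) (by omega)]
    · refine mul_left_cancel₀ (hd (i + 0)) ?_
      rw [hF.mul_succ_left, hG.mul_succ_left, ih i 0 (by omega), ih (i - 1) 0 (by omega)]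
    · refine mul_left_cancel₀ (hd (i + (j + 1))) ?_
      rw [hF.mul_succ_left, hG.mul_succ_left, ih i (j + 1) (by omega),
        ih (i - 1) (j + 1) (by omega), ih i (j + 1 - 1) (by omega)]

end QRecurrence

lemma Qpoly_zero_zero (x y : ℝ) : Qpoly q ρ 0 0 x y = 1 := by
  simp [Qpoly, qBinom, qFact, qHermite, ascP, qPoch]

lemma qRecurrence_Qpoly (hq : -1 < q) (hd : ∀ n, 1 - ρ ^ 2 * q ^ n ≠ 0) (x y : ℝ) :
    QRecurrence q ρ x y fun i j => Qpoly q ρ i j x y := by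
  simp only [Qpoly_eq_QSum]
  exact ⟨QSum_succ_left hq (ascP_div_qPoch_succ hd x y), QSum_succ_right hq⟩

end QpolySymmetry

open QpolySymmetry in
/-- Q_{i,j}(x,y|ρ,q) = Q_{j,i}(y,x|ρ,q). -/
theorem statement5 (q ρ : ℝ) (hq1 : -1 < q) (hq2 : q ≤ 1) (hρ : |ρ| < 1)
    (x y : ℝ) (i j : ℕ) :
    Qpoly q ρ i j x y = Qpoly q ρ j i y x := by
  have hd : ∀ n, 1 - ρ ^ 2 * q ^ n ≠ 0 := fun n => (one_sub_sq_mul_pow_pos hq1 hq2 hρ n).ne'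
  have hsymm := (qRecurrence_Qpoly hq1 hd x y).ext hd (qRecurrence_Qpoly hq1 hd y x).swap
    (by rw [Qpoly_zero_zero, Qpoly_zero_zero])
  exact congrFun (congrFun hsymm i) j
end
end
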